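/- A layered automaton A over a finite alphabet Σ is consistent if and only if it is uniformly semantically deterministic, i.e. L(⟦A⟧,p) = L(⟦A⟧,q) holds for all leaf states p, q with μ̂₁(p) = μ̂₁(q). -/

import Mathlib

open scoped Classical

noncomputable section

/-! ### Infinite words and the parity condition -/

/-- The minimal value occurring infinitely often in a sequence of priorities;
for (eventually) bounded sequences this is the `liminf`. -/
def minInfOften (pi : ℕ → ℕ) : ℕ := sInf {x : ℕ | ∀ N : ℕ, ∃ n : ℕ, N ≤ n ∧ pi n = x}

/-- The (min-)parity acceptance condition: the liminf of the priorities is even. -/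
def ParityAccept (pi : ℕ → ℕ) : Prop := Even (minInfOften pi)

/-- Prepend a finite word to an infinite word. -/
def prependW {α : Type} (u : List α) (w : ℕ → α) : ℕ → α := fun i =>
  if h : i < u.length then u.get ⟨i, h⟩ else w (i - u.length)

/-- The prefix of length `n` of an infinite word, as a list. -/
def wordPrefix {α : Type} (w : ℕ → α) (n : ℕ) : List α := List.ofFn (fun i : Fin n => w i)

/-- Drop the first `n` letters of an infinite word. -/
def wordDrop {α : Type} (w : ℕ → α) (n : ℕ) : ℕ → α := fun i => w (n + i)

/-- The periodic infinite word `v^ω` (junk if `v = []`). -/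
def perWord {α : Type} [Inhabited α] (v : List α) : ℕ → α := fun i => v.getD (i % v.length) default

/-! ### Layered automata -/

/-- A layered automaton over the alphabet `α` with `d` layers.  The (disjoint) layers
are encoded by the function `layer : Q → [1,d]`; each layer is a deterministic
transition system (partial transition function `δ`, which stays inside the layer);
`μ` sends each state of layer `x+1` to its parent in layer `x` (and is the identity
on layer `1`) and is a morphism of transition systems; layer `1` is complete, carries
the initial state, and all its states are reachable from the initial state. -/
structure Layered (Q α : Type) (d : ℕ) where
  layer : Q → ℕ
  layer_pos : ∀ q, 1 ≤ layer q
  layer_le : ∀ q, layer q ≤ d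
  δ : Q → α → Option Q
  δ_layer : ∀ q a q', δ q a = some q' → layer q' = layer q
  μ : Q → Q
  μ_layer : ∀ q, 1 < layer q → layer (μ q) + 1 = layer q
  μ_id : ∀ q, layer q = 1 → μ q = q
  μ_morph : ∀ q a q', 1 < layer q → δ q a = some q' → δ (μ q) a = some (μ q')
  init : Q
  init_layer : layer init = 1
  complete1 : ∀ q a, layer q = 1 → (δ q a).isSome = true
  reach1 : ∀ q, layer q = 1 →
    Relation.ReflTransGen (fun p p' => layer p = 1 ∧ ∃ a, δ p a = some p') init q

namespace Layered

variable {Q R α : Type} {d d' : ℕ}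

/-- The run of the (deterministic) layer transition systems on a finite word. -/
def runList (A : Layered Q α d) : Q → List α → Option Q
  | q, [] => some q
  | q, a :: u =>
    match A.δ q a with
    | some q' => runList A q' u
    | none => none

/-- `μ̂_x q`: the ancestor of `q` in layer `x` (image under the composed morphisms). -/
def muHat (A : Layered Q α d) (x : ℕ) (q : Q) : Q := (A.μ)^[A.layer q - x] q

/-- A leaf state: a state that is not in the image of any of the morphisms `μ_x`. -/
def IsLeaf (A : Layered Q α d) (q : Q) : Prop := ∀ p, 1 < A.layer p → A.μ p ≠ q

/-- `layer(q,a)`: the largest layer `x ≤ layer q` in which `δ_x (μ̂_x q) a` is defined. -/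
def layerOf (A : Layered Q α d) (q : Q) (a : α) : ℕ :=
  Nat.findGreatest (fun x => (A.δ (A.muHat x q) a).isSome = true) (A.layer q)

/-- A state `p` is an ancestor of `q`. -/
def IsAncestor (A : Layered Q α d) (p q : Q) : Prop :=
  A.layer p ≤ A.layer q ∧ A.muHat (A.layer p) q = p

/-! #### Safe languages and strong acceptance -/

/-- Membership of a finite word in the `x`-safe language of `q`. -/
def SafeFin (A : Layered Q α d) (x : ℕ) (q : Q) (u : List α) : Prop :=
  (A.runList (A.muHat x q) u).isSome = true

/-- Membership of an infinite word in the `x`-safe language of `q`. -/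
def SafeInf (A : Layered Q α d) (x : ℕ) (q : Q) (w : ℕ → α) : Prop :=
  ∀ n : ℕ, A.SafeFin x q (wordPrefix w n)

/-- `w` is strongly accepted by the state `p` (which lies in the even layer `x = layer p`):
`w` is `x`-safe from `p` and no decomposition `w = u·w'` admits a state `p'` of layer `x+1`
with a `u`-run from `p` to the parent of `p'` in `T_x` such that `w'` is `(x+1)`-safe from `p'`. -/
def StronglyAcc (A : Layered Q α d) (p : Q) (w : ℕ → α) : Prop :=
  Even (A.layer p) ∧ A.SafeInf (A.layer p) p w ∧
  ∀ (n : ℕ) (p' : Q), A.layer p' = A.layer p + 1 →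
    A.runList p (wordPrefix w n) = some (A.μ p') →
    ¬ A.SafeInf (A.layer p') p' (wordDrop w n)

/-- `w` is strongly rejected by `p` (lying in an odd layer). -/
def StronglyRej (A : Layered Q α d) (p : Q) (w : ℕ → α) : Prop :=
  Odd (A.layer p) ∧ A.SafeInf (A.layer p) p w ∧
  ∀ (n : ℕ) (p' : Q), A.layer p' = A.layer p + 1 →
    A.runList p (wordPrefix w n) = some (A.μ p') →
    ¬ A.SafeInf (A.layer p') p' (wordDrop w n)

/-- Consistency: no two states with the same layer-1 ancestor strongly accept
resp. strongly reject a common infinite word. -/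
def Consistent (A : Layered Q α d) : Prop :=
  ¬ ∃ (p p' : Q) (w : ℕ → α), A.muHat 1 p = A.muHat 1 p' ∧
      A.StronglyAcc p w ∧ A.StronglyRej p' w

/-- `w` is ultimately safe in layer `x`, for the automaton started in the
layer-1 state `q0`. -/
def UltSafeFrom (A : Layered Q α d) (q0 : Q) (x : ℕ) (w : ℕ → α) : Prop :=
  ∃ (n : ℕ) (p : Q), A.layer p = x ∧
    A.runList q0 (wordPrefix w n) = some (A.muHat 1 p) ∧
    A.SafeInf x p (wordDrop w n)

/-- Layered acceptance from `q0`: the maximal layer in which `w` is ultimately safe is even. -/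
def LayeredAcceptFrom (A : Layered Q α d) (q0 : Q) (w : ℕ → α) : Prop :=
  ∃ x : ℕ, Even x ∧ A.UltSafeFrom q0 x w ∧ ∀ y : ℕ, A.UltSafeFrom q0 y w → y ≤ x

/-- Layered rejection from `q0`: the maximal layer in which `w` is ultimately safe is odd. -/
def LayeredRejectFrom (A : Layered Q α d) (q0 : Q) (w : ℕ → α) : Prop :=
  ∃ x : ℕ, Odd x ∧ A.UltSafeFrom q0 x w ∧ ∀ y : ℕ, A.UltSafeFrom q0 y w → y ≤ x

/-! #### The semantics automaton `⟦A⟧` (a simple-by-priorities alternating parity automaton) -/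

/-- The priority of the letter `a` in the state `q` of `⟦A⟧`. -/
def semPrio (A : Layered Q α d) (q : Q) (a : α) : ℕ := A.layerOf q a

/-- The transitions of `⟦A⟧` (between leaf states): `q —a→ q'` iff, for
`x = layer(q,a)`, we have `δ_x (μ̂_x q) a = μ̂_x q'`; the transition carries priority `x`. -/
def semStep (A : Layered Q α d) (q : Q) (a : α) (q' : Q) : Prop :=
  A.IsLeaf q' ∧ A.δ (A.muHat (A.layerOf q a) q) a = some (A.muHat (A.layerOf q a) q')

/-- Runs of `⟦A⟧` over the infinite word `w`, starting in `p`. -/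
def IsSemRun (A : Layered Q α d) (w : ℕ → α) (p : Q) (ρ : ℕ → Q) : Prop :=
  ρ 0 = p ∧ ∀ i : ℕ, A.semStep (ρ i) (w i) (ρ (i + 1))

/-- The sequence of priorities produced by a run of `⟦A⟧` over `w`. -/
def runPrios (A : Layered Q α d) (w : ℕ → α) (ρ : ℕ → Q) : ℕ → ℕ :=
  fun i => A.semPrio (ρ i) (w i)

/-- A resolver for Eve in `⟦A⟧`: given the history (the finite run so far, as a list of
(state, letter) pairs), the current state and a letter of odd priority, it picks a successor. -/
def EveResolver (A : Layered Q α d) (σ : List (Q × α) → Q → α → Q) : Prop :=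
  ∀ (h : List (Q × α)) (q : Q) (a : α), Odd (A.semPrio q a) → A.semStep q a (σ h q a)

/-- A resolver for Adam in `⟦A⟧` (resolving the even-priority steps). -/
def AdamResolver (A : Layered Q α d) (τ : List (Q × α) → Q → α → Q) : Prop :=
  ∀ (h : List (Q × α)) (q : Q) (a : α), Even (A.semPrio q a) → A.semStep q a (τ h q a)

/-- A run is consistent with the Eve-resolver `σ`: every odd-priority step follows `σ`. -/
def ConsEve (A : Layered Q α d) (σ : List (Q × α) → Q → α → Q) (w : ℕ → α) (ρ : ℕ → Q) : Prop :=
  ∀ i : ℕ, Odd (A.semPrio (ρ i) (w i)) →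
    ρ (i + 1) = σ (List.ofFn fun j : Fin i => (ρ (j : ℕ), w (j : ℕ))) (ρ i) (w i)

/-- A run is consistent with the Adam-resolver `τ`: every even-priority step follows `τ`. -/
def ConsAdam (A : Layered Q α d) (τ : List (Q × α) → Q → α → Q) (w : ℕ → α) (ρ : ℕ → Q) : Prop :=
  ∀ i : ℕ, Even (A.semPrio (ρ i) (w i)) →
    ρ (i + 1) = τ (List.ofFn fun j : Fin i => (ρ (j : ℕ), w (j : ℕ))) (ρ i) (w i)

/-- Acceptance of `w` by `⟦A⟧` from the (leaf) state `p`: Eve has a winning strategy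
in the game `G(⟦A⟧,w)`, i.e. a resolver all of whose consistent runs satisfy parity. -/
def SemAccept (A : Layered Q α d) (p : Q) (w : ℕ → α) : Prop :=
  ∃ σ : List (Q × α) → Q → α → Q, A.EveResolver σ ∧
    ∀ ρ : ℕ → Q, A.IsSemRun w p ρ → A.ConsEve σ w ρ → ParityAccept (A.runPrios w ρ)

/-- Uniform semantic determinism: leaf states with the same layer-1 ancestor
recognise the same language in `⟦A⟧`. -/
def UnifSD (A : Layered Q α d) : Prop :=
  ∀ p q : Q, A.IsLeaf p → A.IsLeaf q → A.muHat 1 p = A.muHat 1 q →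
    ∀ w : ℕ → α, (A.SemAccept p w ↔ A.SemAccept q w)

/-! #### Longest suffix resolvers -/

/-- `v` is a suffix-witness to `r`: the layer of `r` has a run labelled `v` ending in `r`. -/
def suffixReaches (A : Layered Q α d) (r : Q) (v : List α) : Prop :=
  ∃ p : Q, A.layer p = A.layer r ∧ A.runList p v = some r

/-- The length of the longest suffix `v` of `u` such that the layer of `r` has a
run labelled `v` ending in `r`. -/
def longestSuffixLen (A : Layered Q α d) (u : List α) (r : Q) : ℕ :=
  Nat.findGreatest (fun k => k ≤ u.length ∧ A.suffixReaches r (u.drop (u.length - k))) u.length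

/-- A longest suffix resolver for Eve, initialised to `u0`: a valid Eve-resolver that,
at a step of odd priority `x` after having read `v`, moves to an `a`-successor `q'`
maximising the length of the longest `(x+1)`-suffix of `u0·v·a` to `μ̂_{x+1} q'`. -/
def IsLongestSuffixResolverE (A : Layered Q α d) (u0 : List α)
    (σ : List (Q × α) → Q → α → Q) : Prop :=
  A.EveResolver σ ∧
  ∀ (h : List (Q × α)) (q : Q) (a : α), Odd (A.semPrio q a) →
    ∀ q' : Q, A.semStep q a q' →
      A.longestSuffixLen (u0 ++ h.map Prod.snd ++ [a]) (A.muHat (A.semPrio q a + 1) q') ≤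
      A.longestSuffixLen (u0 ++ h.map Prod.snd ++ [a]) (A.muHat (A.semPrio q a + 1) (σ h q a))

/-- A longest suffix resolver for Adam, initialised to `u0` (symmetric, for even priorities). -/
def IsLongestSuffixResolverA (A : Layered Q α d) (u0 : List α)
    (τ : List (Q × α) → Q → α → Q) : Prop :=
  A.AdamResolver τ ∧
  ∀ (h : List (Q × α)) (q : Q) (a : α), Even (A.semPrio q a) →
    ∀ q' : Q, A.semStep q a q' →
      A.longestSuffixLen (u0 ++ h.map Prod.snd ++ [a]) (A.muHat (A.semPrio q a + 1) q') ≤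
      A.longestSuffixLen (u0 ++ h.map Prod.snd ++ [a]) (A.muHat (A.semPrio q a + 1) (τ h q a))

/-! #### The random walk on `⟦A⟧` -/

/-- The uniform step probability of the random walk of `⟦A⟧`. -/
def stepProb (A : Layered Q α d) (q : Q) (a : α) (q' : Q) : ENNReal :=
  if A.semStep q a q' then ((Nat.card {p : Q // A.semStep q a p} : ENNReal))⁻¹ else 0

/-- `m` is the Markov measure of the random walk of `⟦A⟧` over the word `w` started at `p`:
a probability measure on `ℕ → Q` whose cylinder probabilities are the products of the
uniform step probabilities. -/
def IsWalkMeasure [MeasurableSpace Q] (A : Layered Q α d) (w : ℕ → α) (p : Q)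
    (m : MeasureTheory.Measure (ℕ → Q)) : Prop :=
  MeasureTheory.IsProbabilityMeasure m ∧
  ∀ (n : ℕ) (s : Fin (n + 1) → Q),
    m {ρ : ℕ → Q | ∀ i : Fin (n + 1), ρ (i : ℕ) = s i} =
      (if s 0 = p then 1 else 0) *
        ∏ i : Fin n, A.stepProb (s i.castSucc) (w (i : ℕ)) (s i.succ)

/-! #### Normal form, centrality, safe minimality, central sequences -/

/-- Normal form: (N1) every layer `x ≥ 2` is a union of non-trivial SCCs, and
(N2) the safe language of every child is strictly smaller than that of its parent. -/
def NormalForm (A : Layered Q α d) : Prop :=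
  ∀ q : Q, 2 ≤ A.layer q →
    (∀ (u : List α) (q' : Q), A.runList q u = some q' →
      ∃ v : List α, v ≠ [] ∧ A.runList q' v = some q) ∧
    (∀ p : Q, 1 < A.layer p → A.μ p = q →
      ∃ u : List α, (A.runList q u).isSome = true ∧ A.runList p u = none)

/-- Inclusion of `x`-safe languages. -/
def SafeLE (A : Layered Q α d) (x : ℕ) (p q : Q) : Prop :=
  (∀ u : List α, A.SafeFin x p u → A.SafeFin x q u) ∧
  (∀ w : ℕ → α, A.SafeInf x p w → A.SafeInf x q w)

/-- Centralised: siblings (same parent) whose safe languages are included,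
lie in the same SCC of their layer. -/
def Centralised (A : Layered Q α d) : Prop :=
  ∀ p q : Q, 2 ≤ A.layer p → A.layer q = A.layer p →
    A.muHat (A.layer p - 1) p = A.muHat (A.layer p - 1) q →
    A.SafeLE (A.layer p) p q →
    (∃ u : List α, A.runList p u = some q) ∧ (∃ v : List α, A.runList q v = some p)

/-- `L(p) = L(q)`: all leaves above (the layer-1 ancestor of) `p` and all leaves above `q`
recognise the same language in `⟦A⟧`. -/
def LangEq1 (A : Layered Q α d) (p q : Q) : Prop :=
  ∀ l l' : Q, A.IsLeaf l → A.IsLeaf l' → A.muHat 1 l = A.muHat 1 p →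
    A.muHat 1 l' = A.muHat 1 q → ∀ w : ℕ → α, (A.SemAccept l w ↔ A.SemAccept l' w)

/-- The equivalence `p ≈_x q`: language equivalence together with equality of all
`y`-safe languages for `2 ≤ y ≤ x`. -/
def ApproxEq (A : Layered Q α d) (x : ℕ) (p q : Q) : Prop :=
  A.LangEq1 p q ∧ ∀ y : ℕ, 2 ≤ y → y ≤ x →
    ((∀ u : List α, A.SafeFin y p u ↔ A.SafeFin y q u) ∧
     (∀ w : ℕ → α, A.SafeInf y p w ↔ A.SafeInf y q w))

/-- Safe minimality: `≈_x`-equivalent states of the same layer are equal. -/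
def SafeMinimal (A : Layered Q α d) : Prop :=
  ∀ p q : Q, A.layer p = A.layer q → A.ApproxEq (A.layer p) p q → p = q

/-- `z` is a central sequence for the state `p` (of layer `x = layer p`). -/
def IsCentralSeq (A : Layered Q α d) (p : Q) (z : List α) : Prop :=
  z ≠ [] ∧ A.runList p z = some p ∧
  (∀ q : Q, A.layer q = A.layer p →
    A.muHat (A.layer p - 1) q = A.muHat (A.layer p - 1) p →
    (A.runList q z = some p ∨ A.runList q z = none)) ∧
  (∀ q' : Q, A.layer q' = A.layer p + 1 →
    A.muHat (A.layer p - 1) q' = A.muHat (A.layer p - 1) p →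
    A.runList q' z = none)

end Layered

/-! ### Morphisms of layered automata -/

/-- A morphism of layered automata. -/
structure IsLayMorphism {Q R α : Type} {d d' : ℕ} (A : Layered Q α d) (B : Layered R α d')
    (φ : Q → R) : Prop where
  map_init : φ A.init = B.init
  map_step : ∀ q a q', A.δ q a = some q' → B.δ (φ q) a = some (φ q')
  map_anc : ∀ p q, A.IsAncestor p q → B.IsAncestor (φ p) (φ q)

/-- A strong morphism of layered automata additionally preserves non-transitions. -/
def IsStrongLayMorphism {Q R α : Type} {d d' : ℕ} (A : Layered Q α d) (B : Layered R α d')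
    (φ : Q → R) : Prop :=
  IsLayMorphism A B φ ∧ ∀ q a, A.δ q a = none → B.δ (φ q) a = none

/-- An isomorphism of layered automata: a bijection on states that restricts to
isomorphisms of the layer transition systems, preserves the initial state, and
commutes with the morphisms `μ`. -/
structure IsLayIso {Q R α : Type} {d d' : ℕ} (A : Layered Q α d) (B : Layered R α d')
    (φ : Q ≃ R) : Prop where
  map_layer : ∀ q, B.layer (φ q) = A.layer q
  map_init : φ A.init = B.init
  map_mu : ∀ q, φ (A.μ q) = B.μ (φ q)
  map_step : ∀ q a, (A.δ q a).map φ = B.δ (φ q) a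

/-- `L(⟦A⟧) = L(⟦B⟧)`: the semantics automata (with any choice of initial leaf states
above the respective initial states) accept the same infinite words. -/
def SemLangEq {Q R α : Type} {d d' : ℕ} (A : Layered Q α d) (B : Layered R α d') : Prop :=
  ∀ (p : Q) (q : R), A.IsLeaf p → A.muHat 1 p = A.init → B.IsLeaf q → B.muHat 1 q = B.init →
    ∀ w : ℕ → α, (A.SemAccept p w ↔ B.SemAccept q w)

/-! ### Deterministic parity automata -/

/-- A deterministic parity automaton over `α` with priorities in `[1,d]`. -/
structure DPA (Q α : Type) (d : ℕ) where
  init : Q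
  next : Q → α → Q
  prio : Q → α → ℕ
  prio_pos : ∀ q a, 1 ≤ prio q a
  prio_le : ∀ q a, prio q a ≤ d

namespace DPA

variable {Q α : Type} {d : ℕ}

/-- The unique run of a DPA on an infinite word. -/
def run (B : DPA Q α d) (w : ℕ → α) : ℕ → Q
  | 0 => B.init
  | n + 1 => B.next (run B w n) (w n)

/-- Acceptance by a DPA: the priorities along the unique run satisfy parity. -/
def Accepts (B : DPA Q α d) (w : ℕ → α) : Prop :=
  ParityAccept (fun i => B.prio (B.run w i) (w i))

end DPA

/-- `L` is ω-regular: recognised by some deterministic parity automaton. -/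
def IsOmegaRegular {α : Type} (L : Set (ℕ → α)) : Prop :=
  ∃ (n d : ℕ) (B : DPA (Fin n) α d), ∀ w : ℕ → α, w ∈ L ↔ B.Accepts w

/-! ### Nondeterministic coBüchi automata -/

/-- A (complete) nondeterministic coBüchi automaton: transitions carry priorities in `{1,2}`. -/
structure NCA (Q α : Type) where
  init : Q
  trans : Q → α → ℕ → Q → Prop
  prio_mem : ∀ q a x q', trans q a x q' → x = 1 ∨ x = 2
  complete : ∀ q a, ∃ x q', trans q a x q'

namespace NCA

variable {Q α : Type}

/-- Nondeterministic acceptance from the state `q`. -/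
def AcceptFrom (B : NCA Q α) (q : Q) (w : ℕ → α) : Prop :=
  ∃ (ρ : ℕ → Q) (pri : ℕ → ℕ), ρ 0 = q ∧
    (∀ i : ℕ, B.trans (ρ i) (w i) (pri i) (ρ (i + 1))) ∧ ParityAccept pri

/-- Semantic determinism: every `a`-successor of `p` recognises `a⁻¹ L(p)`. -/
def SemDet (B : NCA Q α) : Prop :=
  ∀ p a x q, B.trans p a x q →
    ∀ w : ℕ → α, (B.AcceptFrom q w ↔ B.AcceptFrom p (prependW [a] w))

/-- Safe determinism: all `a`-transitions from a state carry the same priority, and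
there is at most one `a`-transition of priority `2` from each state. -/
def SafeDet (B : NCA Q α) : Prop :=
  (∀ q a x q' x' q'', B.trans q a x q' → B.trans q a x' q'' → x = x') ∧
  (∀ q a q' q'', B.trans q a 2 q' → B.trans q a 2 q'' → q' = q'')

/-- 1-saturation: priority-1 transitions go to all language-equivalent states. -/
def OneSaturated (B : NCA Q α) : Prop :=
  ∀ q a p p', B.trans q a 1 p →
    (∀ w : ℕ → α, (B.AcceptFrom p' w ↔ B.AcceptFrom p w)) → B.trans q a 1 p'

end NCA

/-! ### Simple-by-priorities alternating parity automata (abstract) -/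

/-- A simple-by-priorities alternating parity automaton: a complete transition system
over `α × [1,d]` in which all `a`-transitions from a state carry the same priority. -/
structure SPA (Q α : Type) (d : ℕ) where
  init : Q
  step : Q → α → Q → Prop
  prio : Q → α → ℕ
  prio_pos : ∀ q a, 1 ≤ prio q a
  prio_le : ∀ q a, prio q a ≤ d
  complete : ∀ q a, ∃ q', step q a q'

/-! ### The congruence on tuples of finite words -/

/-- The data of the congruence at one level (tuples of a fixed length,
represented as reversed lists of components: the head is the last component). -/
structure CongrLevel (α : Type) where
  bot : List (List α) → Prop
  eq : List (List α) → List (List α) → Prop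
  ptd : List (List α) → Prop

/-- Concatenate a finite word to the last component of a tuple
(tuples are represented as reversed lists: the head is the last component). -/
def tcat {α : Type} (t : List (List α)) (v : List α) : List (List α) :=
  match t with
  | h :: rest => (h ++ v) :: rest
  | [] => []

/-- Merge the last two components of a tuple. -/
def tmerge {α : Type} (t : List (List α)) : List (List α) :=
  match t with
  | u' :: h :: rest => (h ++ u') :: rest
  | t' => t'

/-- The congruence data at level `n` (handling tuples of length `n+1`), defined by
recursion on the level, following the inductive definition of `≈ ⊥`, `≈` and `pointed`. -/
def congrData {α : Type} [Inhabited α] (L : Set (ℕ → α)) : ℕ → CongrLevel α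
  | 0 =>
    { bot := fun _ => False
      eq := fun t s =>
        match t, s with
        | [u], [v] => ∀ w : ℕ → α, (prependW u w ∈ L ↔ prependW v w ∈ L)
        | _, _ => False
      ptd := fun _ => True }
  | n + 1 =>
    let C := congrData L n
    let bot : List (List α) → Prop := fun t =>
      match t with
      | u' :: ubar =>
        C.bot (tmerge (u' :: ubar)) ∨
        ∀ w : List α, w ≠ [] → C.eq (tcat (tmerge (u' :: ubar)) w) ubar →
          ((prependW ubar.reverse.flatten (perWord (u' ++ w)) ∈ L) ↔ Even (n + 1))
      | [] => True
    let eq : List (List α) → List (List α) → Prop := fun t s =>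
      C.eq (tmerge t) (tmerge s) ∧ ∀ v : List α, (bot (tcat t v) ↔ bot (tcat s v))
    let ptd : List (List α) → Prop := fun t =>
      match t with
      | u' :: ubar =>
        ¬ bot (u' :: ubar) ∧ C.ptd ubar ∧
        ∀ (vbar : List (List α)) (v' : List α), vbar.length = n + 1 → C.ptd vbar →
          C.eq (tcat vbar v') ubar → ¬ bot ((v' ++ u') :: vbar) →
          eq ((v' ++ u') :: vbar) (u' :: ubar)
      | [] => False
    { bot := bot, eq := eq, ptd := ptd }

/-- `t ≈ ⊥` (for a nonempty tuple `t`, in reversed representation). -/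
def TupBot {α : Type} [Inhabited α] (L : Set (ℕ → α)) (t : List (List α)) : Prop :=
  (congrData L (t.length - 1)).bot t

/-- `t ≈ s` (for nonempty tuples of the same length, in reversed representation). -/
def TupEq {α : Type} [Inhabited α] (L : Set (ℕ → α)) (t s : List (List α)) : Prop :=
  t.length = s.length ∧ (congrData L (t.length - 1)).eq t s

/-- `t` is pointed. -/
def TupPointed {α : Type} [Inhabited α] (L : Set (ℕ → α)) (t : List (List α)) : Prop :=
  (congrData L (t.length - 1)).ptd t

/-- `cls` exhibits `A` as (a copy of) the congruence automaton `A_≈` of `L`: its states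
are the `≈`-classes of pointed tuples (the layer being the tuple length), transitions
are given by concatenation in the last component, the initial state is the class of
`(ε)`, and the morphisms are given by merging the last two components. -/
structure IsCongrAut {α : Type} [Inhabited α] (L : Set (ℕ → α)) {Q : Type} {d : ℕ}
    (A : Layered Q α d) (cls : (t : List (List α)) → TupPointed L t → Q) : Prop where
  surj : ∀ q : Q, ∃ (t : List (List α)) (ht : TupPointed L t), cls t ht = q
  cls_eq : ∀ t ht s hs, cls t ht = cls s hs ↔ TupEq L t s
  layer_eq : ∀ t ht, A.layer (cls t ht) = t.length
  init_eq : ∀ h : TupPointed L [([] : List α)], cls [([] : List α)] h = A.init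
  step_some : ∀ t ht (a : α) (h' : TupPointed L (tcat t [a])),
    A.δ (cls t ht) a = some (cls (tcat t [a]) h')
  step_none : ∀ t ht (a : α), TupBot L (tcat t [a]) → A.δ (cls t ht) a = none
  mu_eq : ∀ (u' : List α) (ubar : List (List α)) (h : TupPointed L (u' :: ubar))
    (h' : TupPointed L (tmerge (u' :: ubar))), ubar ≠ [] →
    A.μ (cls (u' :: ubar) h) = cls (tmerge (u' :: ubar)) h'

end
/-!
If `w` is strongly accepted by `p`, every run of `⟦A⟧` on `w` from a leaf above `p` projects onto
the run of `p` in its layer `x`, and its priorities cannot stay above `x` forever (that would be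
an escape from `p`); so the liminf of its priorities is exactly `x`, even. Strong acceptance by
`p` and strong rejection by `p'` with `μ̂₁ p = μ̂₁ p'` would thus separate the languages of two
leaves above `p` and `p'`.

Conversely, let `x` be the greatest layer in which `w` is ultimately safe; the state witnessing
this is strongly safe (an escape would make `w` ultimately safe in layer `x + 1`). Let the player
of parity `x` resolve the nondeterminism of `⟦A⟧` by the longest suffix resolver, and let `y` be
the liminf of the priorities of a resulting run. If, after the priorities have settled to be
`≥ y`, the run could escape to layer `y + 1`, then at every later step of priority `y` the
resolver would move to a state whose layer-`(y+1)` ancestor is reached by a layer-`(y+1)` run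
from the escape point; that run dies at the next step of priority `y`, so these runs start in
pairwise distinct states, which is impossible for infinitely many steps. Hence the projection
of the run to layer `y` is strongly safe, and consistency forces `y ≡ x (mod 2)`: acceptance by
`⟦A⟧` from any leaf above a state of `T₁` is decided by the parity of `x`.
-/

open Filter

theorem minInfOften_eq_sInf_frequently (pi : ℕ → ℕ) :
    minInfOften pi = sInf {x | ∃ᶠ n in atTop, pi n = x} := by
  simp only [minInfOften, frequently_atTop]

theorem minInfOften_eq_of_eventually_of_frequently {pi : ℕ → ℕ} {x : ℕ}
    (hle : ∀ᶠ n in atTop, x ≤ pi n) (hx : ∃ᶠ n in atTop, pi n = x) : minInfOften pi = x := by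
  rw [minInfOften_eq_sInf_frequently]
  refine le_antisymm (Nat.sInf_le hx) ?_
  have hmem : sInf {x | ∃ᶠ n in atTop, pi n = x} ∈ {x | ∃ᶠ n in atTop, pi n = x} :=
    Nat.sInf_mem ⟨x, hx⟩
  obtain ⟨n, hn, hxn⟩ := (Filter.Frequently.and_eventually hmem hle).exists
  exact hn ▸ hxn

theorem frequently_eq_minInfOften {pi : ℕ → ℕ} {D : ℕ} (h : ∀ n, pi n ≤ D) :
    ∃ᶠ n in atTop, pi n = minInfOften pi := by
  rw [minInfOften_eq_sInf_frequently]
  refine Nat.sInf_mem (s := {x | ∃ᶠ n in atTop, pi n = x}) ?_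
  let f : ℕ → Fin (D + 1) := fun n => ⟨pi n, Nat.lt_succ_of_le (h n)⟩
  obtain ⟨v, hv⟩ := Finite.exists_infinite_fiber f
  refine ⟨v, Nat.frequently_atTop_iff_infinite.mpr ?_⟩
  convert Set.infinite_coe_iff.mp hv using 1
  ext n
  simp [f, Fin.ext_iff]

theorem eventually_minInfOften_le {pi : ℕ → ℕ} : ∀ᶠ n in atTop, minInfOften pi ≤ pi n := by
  have hrare : ∀ v ∈ Set.Iio (minInfOften pi), ∀ᶠ n in atTop, pi n ≠ v := fun v hv =>
    not_frequently.mp (Nat.notMem_of_lt_sInf (minInfOften_eq_sInf_frequently pi ▸ hv))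
  filter_upwards [(Set.finite_Iio _).eventually_all.mpr hrare] with n hn
  by_contra hlt
  exact hn (pi n) (not_le.mp hlt) rfl

theorem frequently_atTop_add_left {P : ℕ → Prop} (h : ∃ᶠ i in atTop, P i) (n : ℕ) :
    ∃ᶠ i in atTop, P (n + i) := by
  rw [frequently_atTop] at h ⊢
  intro a
  obtain ⟨b, hab, hb⟩ := h (n + a)
  exact ⟨b - n, by omega, by rwa [Nat.add_sub_cancel' (by omega)]⟩

theorem wordPrefix_succ {α : Type} (w : ℕ → α) (n : ℕ) :
    wordPrefix w (n + 1) = wordPrefix w n ++ [w n] := by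
  rw [wordPrefix, List.ofFn_succ', List.concat_eq_append]
  rfl

theorem length_wordPrefix {α : Type} (w : ℕ → α) (n : ℕ) : (wordPrefix w n).length = n := by
  simp [wordPrefix]

@[simp]
theorem wordDrop_zero {α : Type} (w : ℕ → α) : wordDrop w 0 = w := by
  funext i; simp [wordDrop]

theorem wordDrop_wordDrop {α : Type} (w : ℕ → α) (m n : ℕ) :
    wordDrop (wordDrop w m) n = wordDrop w (m + n) := by
  funext i; simp [wordDrop, Nat.add_assoc]

theorem wordPrefix_add {α : Type} (w : ℕ → α) (m n : ℕ) :
    wordPrefix w (m + n) = wordPrefix w m ++ wordPrefix (wordDrop w m) n := by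
  induction n with
  | zero => exact (List.append_nil _).symm
  | succ n ih => rw [← Nat.add_assoc, wordPrefix_succ, ih, wordPrefix_succ, List.append_assoc]; rfl

theorem drop_wordPrefix {α : Type} (w : ℕ → α) (m n : ℕ) :
    (wordPrefix w (m + n)).drop m = wordPrefix (wordDrop w m) n := by
  rw [wordPrefix_add, List.drop_left' (length_wordPrefix w m)]

namespace Layered

variable {Q α : Type} {d : ℕ} (A : Layered Q α d)

/-! ### Runs of the layers and their ancestors -/

theorem runList_append (q : Q) (u v : List α) :
    A.runList q (u ++ v) = (A.runList q u).bind (A.runList · v) := by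
  induction u generalizing q with
  | nil => rfl
  | cons a u ih =>
    simp only [List.cons_append, runList]
    cases A.δ q a <;> simp [ih]

theorem runList_singleton (q : Q) (a : α) : A.runList q [a] = A.δ q a := by
  cases h : A.δ q a <;> simp [runList, h]

theorem runList_append_singleton {q r : Q} {u : List α} (h : A.runList q u = some r) (a : α) :
    A.runList q (u ++ [a]) = A.δ r a := by
  rw [runList_append, h, Option.bind_some, runList_singleton]

theorem runList_append_of_eq_none {q : Q} {u : List α} (h : A.runList q u = none) (v : List α) :
    A.runList q (u ++ v) = none := by
  rw [runList_append, h, Option.bind_none]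

theorem layer_of_runList_eq_some {q r : Q} {u : List α} (h : A.runList q u = some r) :
    A.layer r = A.layer q := by
  induction u generalizing q with
  | nil => cases h; rfl
  | cons a u ih =>
    simp only [runList] at h
    split at h
    · next q' hq' => rw [ih h, A.δ_layer q a q' hq']
    · cases h

theorem runList_isSome_of_layer_eq_one {q : Q} (hq : A.layer q = 1) (u : List α) :
    (A.runList q u).isSome := by
  induction u generalizing q with
  | nil => rfl
  | cons a u ih =>
    obtain ⟨q', hq'⟩ := Option.isSome_iff_exists.mp (A.complete1 q a hq)
    simp only [runList, hq']
    exact ih (by rw [A.δ_layer q a q' hq', hq])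

theorem δ_mu_of_eq_some {q q' : Q} {a : α} (h : A.δ q a = some q') :
    A.δ (A.μ q) a = some (A.μ q') := by
  rcases (A.layer_pos q).lt_or_eq with hq | hq
  · exact A.μ_morph q a q' hq h
  · rw [A.μ_id q hq.symm, A.μ_id q' (by rw [A.δ_layer q a q' h, hq]), h]

theorem δ_iterate_mu_of_eq_some {q q' : Q} {a : α} (h : A.δ q a = some q') (k : ℕ) :
    A.δ (A.μ^[k] q) a = some (A.μ^[k] q') := by
  induction k with
  | zero => exact h
  | succ k ih =>
    simp only [Function.iterate_succ_apply']
    exact A.δ_mu_of_eq_some ih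

theorem runList_iterate_mu {q r : Q} {u : List α} (h : A.runList q u = some r) (k : ℕ) :
    A.runList (A.μ^[k] q) u = some (A.μ^[k] r) := by
  induction u generalizing q with
  | nil => cases h; rfl
  | cons a u ih =>
    simp only [runList] at h ⊢
    split at h
    · next q' hq' =>
      simp only [A.δ_iterate_mu_of_eq_some hq' k]
      exact ih h
    · cases h

theorem layer_iterate_mu {q : Q} {k : ℕ} (hk : k < A.layer q) :
    A.layer (A.μ^[k] q) = A.layer q - k := by
  induction k with
  | zero => rfl
  | succ k ih =>
    rw [Function.iterate_succ_apply']
    have := A.μ_layer (A.μ^[k] q) (by rw [ih (by omega)]; omega)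
    rw [ih (by omega)] at this
    omega

theorem layer_muHat {q : Q} {x : ℕ} (hx : 1 ≤ x) (hxq : x ≤ A.layer q) :
    A.layer (A.muHat x q) = x := by
  rw [muHat, A.layer_iterate_mu (by omega)]
  omega

theorem muHat_eq_iterate {q : Q} {x z : ℕ} (h : A.layer q = z) : A.muHat x q = A.μ^[z - x] q := by
  rw [muHat, h]

theorem muHat_of_layer_le {q : Q} {x : ℕ} (h : A.layer q ≤ x) : A.muHat x q = q := by
  rw [muHat, Nat.sub_eq_zero_of_le h, Function.iterate_zero_apply]

theorem muHat_self (q : Q) : A.muHat (A.layer q) q = q :=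
  A.muHat_of_layer_le le_rfl

theorem le_layer_of_layer_muHat {q : Q} {x : ℕ} (h : A.layer (A.muHat x q) = x) :
    x ≤ A.layer q := by
  by_contra hlt
  rw [A.muHat_of_layer_le (by omega)] at h
  omega

theorem muHat_muHat {q : Q} {x y : ℕ} (hx : 1 ≤ x) (hxy : x ≤ y) (hy : y ≤ A.layer q) :
    A.muHat x (A.muHat y q) = A.muHat x q := by
  rw [muHat, A.layer_muHat (hx.trans hxy) hy, muHat, ← Function.iterate_add_apply]
  congr 1
  omega

theorem muHat_one_eq_of_muHat_eq {l p : Q} {x : ℕ} (hx : 1 ≤ x) (hxl : x ≤ A.layer l)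
    (h : A.muHat x l = p) : A.muHat 1 p = A.muHat 1 l := by
  rw [← h, A.muHat_muHat le_rfl hx hxl]

theorem mu_muHat_succ {q : Q} {x : ℕ} (h : x < A.layer q) :
    A.μ (A.muHat (x + 1) q) = A.muHat x q := by
  rw [muHat, muHat, ← Function.iterate_succ_apply' A.μ]
  congr 1
  omega

theorem runList_muHat {q r : Q} {u : List α} (h : A.runList q u = some r) (x : ℕ) :
    A.runList (A.muHat x q) u = some (A.muHat x r) := by
  rw [muHat, muHat, A.layer_of_runList_eq_some h]
  exact A.runList_iterate_mu h _

/-! ### Runs of the semantics automaton -/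

theorem δ_muHat_one_isSome (q : Q) (a : α) : (A.δ (A.muHat 1 q) a).isSome :=
  A.complete1 _ a (A.layer_muHat le_rfl (A.layer_pos q))

theorem one_le_layerOf (q : Q) (a : α) : 1 ≤ A.layerOf q a :=
  Nat.le_findGreatest (A.layer_pos q) (A.δ_muHat_one_isSome q a)

theorem layerOf_le (q : Q) (a : α) : A.layerOf q a ≤ A.layer q :=
  Nat.findGreatest_le _

theorem le_layerOf {q : Q} {a : α} {x : ℕ} (hx : x ≤ A.layer q)
    (h : (A.δ (A.muHat x q) a).isSome) : x ≤ A.layerOf q a :=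
  Nat.le_findGreatest hx h

theorem δ_muHat_layerOf_isSome (q : Q) (a : α) : (A.δ (A.muHat (A.layerOf q a) q) a).isSome :=
  Nat.findGreatest_spec (P := fun x => (A.δ (A.muHat x q) a).isSome) (A.layer_pos q)
    (A.δ_muHat_one_isSome q a)

theorem δ_muHat_eq_none_of_layerOf_lt {q : Q} {a : α} {x : ℕ} (h : A.layerOf q a < x)
    (hx : x ≤ A.layer q) : A.δ (A.muHat x q) a = none :=
  Option.not_isSome_iff_eq_none.mp (Nat.findGreatest_is_greatest h hx)

theorem layerOf_le_layer_of_semStep {q q' : Q} {a : α} (h : A.semStep q a q') :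
    A.layerOf q a ≤ A.layer q' := by
  apply A.le_layer_of_layer_muHat
  rw [A.δ_layer _ a _ h.2]
  exact A.layer_muHat (A.one_le_layerOf q a) (A.layerOf_le q a)

theorem δ_muHat_of_semStep {q q' : Q} {a : α} (h : A.semStep q a q') {x : ℕ} (hx : 1 ≤ x)
    (hxz : x ≤ A.layerOf q a) : A.δ (A.muHat x q) a = some (A.muHat x q') := by
  have hzq := A.layerOf_le q a
  have hzq' := A.layerOf_le_layer_of_semStep h
  have hproj : ∀ p, A.layerOf q a ≤ A.layer p →
      A.μ^[A.layerOf q a - x] (A.muHat (A.layerOf q a) p) = A.muHat x p := fun p hp => by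
    rw [← A.muHat_muHat hx hxz hp, A.muHat_eq_iterate (A.layer_muHat (hx.trans hxz) hp)]
  simpa only [hproj q hzq, hproj q' hzq'] using
    A.δ_iterate_mu_of_eq_some h.2 (A.layerOf q a - x)

theorem exists_isLeaf_muHat_eq (r : Q) :
    ∃ l, A.IsLeaf l ∧ A.layer r ≤ A.layer l ∧ A.muHat (A.layer r) l = r := by
  by_cases hr : A.IsLeaf r
  · exact ⟨r, hr, le_rfl, A.muHat_self r⟩
  · simp only [IsLeaf, not_forall, not_not] at hr
    obtain ⟨p, hp, hpr⟩ := hr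
    have hlp : A.layer r + 1 = A.layer p := hpr ▸ A.μ_layer p hp
    obtain ⟨l, hl, hpl, hlp'⟩ := exists_isLeaf_muHat_eq p
    refine ⟨l, hl, by omega, ?_⟩
    rw [← A.mu_muHat_succ (by omega), hlp, hlp', hpr]
termination_by d - A.layer r
decreasing_by have := A.layer_le p; omega

theorem exists_semStep (q : Q) (a : α) : ∃ q', A.semStep q a q' := by
  obtain ⟨r, hr⟩ := Option.isSome_iff_exists.mp (A.δ_muHat_layerOf_isSome q a)
  obtain ⟨l, hl, hrl, hlr⟩ := A.exists_isLeaf_muHat_eq r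
  have hlayer : A.layer r = A.layerOf q a := by
    rw [A.δ_layer _ a _ hr, A.layer_muHat (A.one_le_layerOf q a) (A.layerOf_le q a)]
  exact ⟨l, hl, by rw [hr, ← hlayer, hlr]⟩

variable {w : ℕ → α} {ρ : ℕ → Q}

theorem runList_muHat_of_semStep (hstep : ∀ i, A.semStep (ρ i) (w i) (ρ (i + 1))) {x : ℕ}
    (hx : 1 ≤ x) {n m : ℕ} (hge : ∀ i, n ≤ i → i < n + m → x ≤ A.layerOf (ρ i) (w i)) :
    A.runList (A.muHat x (ρ n)) (wordPrefix (wordDrop w n) m) = some (A.muHat x (ρ (n + m))) := by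
  induction m with
  | zero => rfl
  | succ m ih =>
    rw [wordPrefix_succ, A.runList_append_singleton (ih fun i h1 h2 => hge i h1 (by omega))]
    exact A.δ_muHat_of_semStep (hstep (n + m)) hx (hge _ (by omega) (by omega))

theorem runList_muHat_one_of_semStep (hstep : ∀ i, A.semStep (ρ i) (w i) (ρ (i + 1))) (n : ℕ) :
    A.runList (A.muHat 1 (ρ 0)) (wordPrefix w n) = some (A.muHat 1 (ρ n)) := by
  simpa using A.runList_muHat_of_semStep hstep le_rfl (n := 0) (m := n)
    fun i _ _ => A.one_le_layerOf (ρ i) (w i)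

def resolvedRun (π : List (Q × α) → Q → α → Q) (w : ℕ → α) (p : Q) : ℕ → Q
  | 0 => p
  | n + 1 => π (List.ofFn fun j : Fin n => (resolvedRun π w p j, w j)) (resolvedRun π w p n) (w n)

variable {A}

theorem exists_isSemRun_consEve_consAdam {σ τ : List (Q × α) → Q → α → Q} (hσ : A.EveResolver σ)
    (hτ : A.AdamResolver τ) (w : ℕ → α) (p : Q) :
    ∃ ρ, A.IsSemRun w p ρ ∧ A.ConsEve σ w ρ ∧ A.ConsAdam τ w ρ := by
  let π h q a := if Odd (A.semPrio q a) then σ h q a else τ h q a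
  have hρ : ∀ i, resolvedRun π w p (i + 1) = π _ (resolvedRun π w p i) (w i) := fun i => by
    rw [resolvedRun]
  refine ⟨resolvedRun π w p, ⟨by rw [resolvedRun], fun i => ?_⟩, fun i hi => ?_, fun i hi => ?_⟩
  · rw [hρ]
    by_cases hi : Odd (A.semPrio (resolvedRun π w p i) (w i))
    · simpa only [π, if_pos hi] using hσ _ _ _ hi
    · simpa only [π, if_neg hi] using hτ _ _ _ (Nat.not_odd_iff_even.mp hi)
  · rw [hρ]; exact if_pos hi
  · rw [hρ]; exact if_neg (Nat.not_odd_iff_even.mpr hi)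

/-! ### Strong safety -/

variable (A)

/-- `A.StronglyAcc p w` unfolds to `Even (A.layer p) ∧ A.StronglySafe p w`, and
`A.StronglyRej p w` to `Odd (A.layer p) ∧ A.StronglySafe p w`. -/
def StronglySafe (p : Q) (w : ℕ → α) : Prop :=
  A.SafeInf (A.layer p) p w ∧
  ∀ (n : ℕ) (p' : Q), A.layer p' = A.layer p + 1 →
    A.runList p (wordPrefix w n) = some (A.μ p') → ¬ A.SafeInf (A.layer p') p' (wordDrop w n)

variable {A}

theorem safeInf_layer_iff {p : Q} :
    A.SafeInf (A.layer p) p w ↔ ∀ n, (A.runList p (wordPrefix w n)).isSome := by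
  simp only [SafeInf, SafeFin, muHat_self]

theorem StronglySafe.drop {p p₁ : Q} (hp : A.StronglySafe p w) {k : ℕ}
    (hk : A.runList p (wordPrefix w k) = some p₁) : A.StronglySafe p₁ (wordDrop w k) := by
  have hlayer := A.layer_of_runList_eq_some hk
  refine ⟨safeInf_layer_iff.mpr fun n => ?_, fun n p' hp' hrun => ?_⟩
  · simpa [wordPrefix_add, runList_append, hk] using safeInf_layer_iff.mp hp.1 (k + n)
  · rw [wordDrop_wordDrop]
    refine hp.2 (k + n) p' (by omega) ?_
    rw [wordPrefix_add, runList_append, hk, Option.bind_some, hrun]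

theorem even_layer_iff_of_stronglySafe (hcons : A.Consistent) {p q : Q}
    (hpq : A.muHat 1 p = A.muHat 1 q) (hp : A.StronglySafe p w) (hq : A.StronglySafe q w) :
    Even (A.layer p) ↔ Even (A.layer q) := by
  rcases Nat.even_or_odd (A.layer p) with hp_even | hp_odd <;>
    rcases Nat.even_or_odd (A.layer q) with hq_even | hq_odd
  · exact iff_of_true hp_even hq_even
  · exact (hcons ⟨p, q, w, hpq, ⟨hp_even, hp⟩, ⟨hq_odd, hq⟩⟩).elim
  · exact (hcons ⟨q, p, w, hpq.symm, ⟨hq_even, hq⟩, ⟨hp_odd, hp⟩⟩).elim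
  · exact iff_of_false (Nat.not_even_iff_odd.mpr hp_odd) (Nat.not_even_iff_odd.mpr hq_odd)

theorem minInfOften_runPrios_of_stronglySafe {p l : Q} (hp : A.StronglySafe p w)
    (hlp : A.muHat (A.layer p) l = p) (hρ : A.IsSemRun w l ρ) :
    minInfOften (A.runPrios w ρ) = A.layer p := by
  obtain ⟨hρ0, hstep⟩ := hρ
  have hx : 1 ≤ A.layer p := A.layer_pos p
  have hstart : A.muHat (A.layer p) (ρ 0) = p := hρ0 ▸ hlp
  have hrun : ∀ i, (∀ j < i, A.layer p ≤ A.layerOf (ρ j) (w j)) →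
      A.runList p (wordPrefix w i) = some (A.muHat (A.layer p) (ρ i)) := fun i h => by
    have := A.runList_muHat_of_semStep hstep hx (n := 0) (m := i) fun j _ hj => h j (by omega)
    rwa [wordDrop_zero, Nat.zero_add, hstart] at this
  have hge : ∀ i, A.layer p ≤ A.layerOf (ρ i) (w i) := by
    intro i
    induction i using Nat.strong_induction_on with
    | _ i ih =>
      have hrun_i := hrun i ih
      have hsafe := safeInf_layer_iff.mp hp.1 (i + 1)
      rw [wordPrefix_succ, A.runList_append_singleton hrun_i] at hsafe
      refine A.le_layerOf (A.le_layer_of_layer_muHat ?_) hsafe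
      rw [A.layer_of_runList_eq_some hrun_i]
  refine minInfOften_eq_of_eventually_of_frequently (Eventually.of_forall hge) ?_
  by_contra hrare
  obtain ⟨N, hN⟩ := (not_frequently.mp hrare).exists_forall_of_atTop
  have hgt : ∀ i, N ≤ i → A.layer p + 1 ≤ A.layerOf (ρ i) (w i) := fun i hi =>
    lt_of_le_of_ne (hge i) (Ne.symm (hN i hi))
  have hN_layer : A.layer p + 1 ≤ A.layer (ρ N) := (hgt N le_rfl).trans (A.layerOf_le _ _)
  have hp' : A.layer (A.muHat (A.layer p + 1) (ρ N)) = A.layer p + 1 :=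
    A.layer_muHat (by omega) hN_layer
  refine hp.2 N _ hp' ?_ ?_
  · rw [A.mu_muHat_succ (by omega)]
    exact hrun N fun j _ => hge j
  · intro m
    rw [SafeFin, hp', A.muHat_of_layer_le hp'.le,
      A.runList_muHat_of_semStep hstep (by omega) fun i hi _ => hgt i hi]
    rfl

theorem semAccept_of_stronglyAcc {p l : Q} (hp : A.StronglyAcc p w)
    (hlp : A.muHat (A.layer p) l = p) :
    A.SemAccept l w := by
  refine ⟨fun _ q a => (A.exists_semStep q a).choose,
    fun _ q a _ => (A.exists_semStep q a).choose_spec, fun ρ hρ _ => ?_⟩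
  rw [ParityAccept, minInfOften_runPrios_of_stronglySafe hp.2 hlp hρ]
  exact hp.1

theorem not_semAccept_of_stronglyRej {p l : Q} (hp : A.StronglyRej p w)
    (hlp : A.muHat (A.layer p) l = p) :
    ¬ A.SemAccept l w := by
  rintro ⟨σ, hσ, hwin⟩
  obtain ⟨ρ, hρ, hρσ, -⟩ := exists_isSemRun_consEve_consAdam hσ
    (τ := fun _ q a => (A.exists_semStep q a).choose)
    (fun _ q a _ => (A.exists_semStep q a).choose_spec) w l
  have hacc := hwin ρ hρ hρσ
  rw [ParityAccept, minInfOften_runPrios_of_stronglySafe hp.2 hlp hρ] at hacc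
  exact Nat.not_even_iff_odd.mpr hp.1 hacc

theorem consistent_of_unifSD (h : A.UnifSD) : A.Consistent := by
  rintro ⟨p, p', w, hpp', hacc, hrej⟩
  obtain ⟨l, hl, hpl, hlp⟩ := A.exists_isLeaf_muHat_eq p
  obtain ⟨l', hl', hpl', hlp'⟩ := A.exists_isLeaf_muHat_eq p'
  have hll' : A.muHat 1 l = A.muHat 1 l' := by
    rw [← A.muHat_one_eq_of_muHat_eq (A.layer_pos p) hpl hlp, hpp',
      A.muHat_one_eq_of_muHat_eq (A.layer_pos p') hpl' hlp']
  exact not_semAccept_of_stronglyRej hrej hlp'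
    ((h l l' hl hl' hll' w).mp (semAccept_of_stronglyAcc hacc hlp))

/-! ### Longest suffix resolvers -/

variable (A)

theorem suffixReaches_nil (r : Q) : A.suffixReaches r [] := ⟨r, rfl, rfl⟩

def MaximisesSuffixAt (w : ℕ → α) (ρ : ℕ → Q) (i : ℕ) : Prop :=
  ∀ q', A.semStep (ρ i) (w i) q' →
    A.longestSuffixLen (wordPrefix w (i + 1)) (A.muHat (A.semPrio (ρ i) (w i) + 1) q') ≤
      A.longestSuffixLen (wordPrefix w (i + 1)) (A.muHat (A.semPrio (ρ i) (w i) + 1) (ρ (i + 1)))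

theorem exists_longestSuffixResolver [Finite Q] :
    ∃ σ, A.IsLongestSuffixResolverE [] σ ∧ A.IsLongestSuffixResolverA [] σ := by
  have hbest : ∀ (h : List (Q × α)) (q : Q) (a : α), ∃ q' ∈ {q' | A.semStep q a q'},
      ∀ q'' ∈ {q' | A.semStep q a q'},
        A.longestSuffixLen ([] ++ h.map Prod.snd ++ [a]) (A.muHat (A.semPrio q a + 1) q'') ≤
          A.longestSuffixLen ([] ++ h.map Prod.snd ++ [a]) (A.muHat (A.semPrio q a + 1) q') :=
    fun h q a => Set.exists_max_image _ _ (Set.toFinite _) (A.exists_semStep q a)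
  choose σ hσ hmax using hbest
  exact ⟨σ, ⟨fun h q a _ => hσ h q a, fun h q a _ => hmax h q a⟩,
    ⟨fun h q a _ => hσ h q a, fun h q a _ => hmax h q a⟩⟩

variable {A} {σ : List (Q × α) → Q → α → Q}

theorem suffixReaches.drop {r : Q} {u : List α} (h : A.suffixReaches r u) (n : ℕ) :
    A.suffixReaches r (u.drop n) := by
  obtain ⟨p, hp, hrun⟩ := h
  rw [← List.take_append_drop n u, runList_append, Option.bind_eq_some_iff] at hrun
  obtain ⟨t, ht, hrun⟩ := hrun
  exact ⟨t, (A.layer_of_runList_eq_some ht).trans hp, hrun⟩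

theorem le_longestSuffixLen_iff {u : List α} {r : Q} {k : ℕ} (hk : k ≤ u.length) :
    k ≤ A.longestSuffixLen u r ↔ A.suffixReaches r (u.drop (u.length - k)) := by
  refine ⟨fun h => ?_, fun h => Nat.le_findGreatest hk ⟨hk, h⟩⟩
  have hspec : A.longestSuffixLen u r ≤ u.length ∧
      A.suffixReaches r (u.drop (u.length - A.longestSuffixLen u r)) :=
    Nat.findGreatest_spec (m := 0)
      (P := fun k => k ≤ u.length ∧ A.suffixReaches r (u.drop (u.length - k))) (Nat.zero_le _)
      ⟨Nat.zero_le _, by simpa using A.suffixReaches_nil r⟩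
  have := hspec.2.drop (A.longestSuffixLen u r - k)
  rwa [List.drop_drop, show u.length - A.longestSuffixLen u r + (A.longestSuffixLen u r - k) =
    u.length - k by omega] at this

theorem MaximisesSuffixAt.suffixReaches_wordDrop {n i : ℕ} (h : A.MaximisesSuffixAt w ρ (n + i))
    {x : ℕ} (hx : A.layerOf (ρ (n + i)) (w (n + i)) = x) {q' : Q}
    (hq' : A.semStep (ρ (n + i)) (w (n + i)) q')
    (hreach : A.suffixReaches (A.muHat (x + 1) q') (wordPrefix (wordDrop w n) (i + 1))) :
    A.suffixReaches (A.muHat (x + 1) (ρ (n + i + 1))) (wordPrefix (wordDrop w n) (i + 1)) := by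
  have key : ∀ r, A.suffixReaches r (wordPrefix (wordDrop w n) (i + 1)) ↔
      i + 1 ≤ A.longestSuffixLen (wordPrefix w (n + i + 1)) r := fun r => by
    rw [le_longestSuffixLen_iff (by rw [length_wordPrefix]; omega), length_wordPrefix,
      show n + i + 1 - (i + 1) = n by omega, Nat.add_assoc, drop_wordPrefix]
  have hmax := h q' hq'
  simp only [semPrio, hx] at hmax
  exact (key _).mpr (((key _).mp hreach).trans hmax)

theorem nil_append_map_snd_ofFn_append (i : ℕ) :
    [] ++ (List.ofFn fun j : Fin i => (ρ j, w j)).map Prod.snd ++ [w i] = wordPrefix w (i + 1) := by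
  rw [wordPrefix_succ, List.map_ofFn]
  rfl

theorem IsLongestSuffixResolverE.maximisesSuffixAt (hσ : A.IsLongestSuffixResolverE [] σ)
    (hρ : A.ConsEve σ w ρ) {i : ℕ} (hi : Odd (A.semPrio (ρ i) (w i))) :
    A.MaximisesSuffixAt w ρ i := fun q' hq' => by
  rw [hρ i hi, ← nil_append_map_snd_ofFn_append]
  exact hσ.2 _ _ _ hi q' hq'

theorem IsLongestSuffixResolverA.maximisesSuffixAt (hσ : A.IsLongestSuffixResolverA [] σ)
    (hρ : A.ConsAdam σ w ρ) {i : ℕ} (hi : Even (A.semPrio (ρ i) (w i))) :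
    A.MaximisesSuffixAt w ρ i := fun q' hq' => by
  rw [hρ i hi, ← nil_append_map_snd_ofFn_append]
  exact hσ.2 _ _ _ hi q' hq'

/-! ### Consistency implies uniform semantic determinism -/

variable {y : ℕ}

/-- The leaf above the state reached by `p` after `i + 1` letters is an admissible successor at
step `i`, and its ancestor in layer `y + 1` is reached by a run on the whole prefix; hence so is
that of the successor actually chosen. -/
theorem exists_runList_eq_muHat_succ (hy : 1 ≤ y)
    (hstep : ∀ i, A.semStep (ρ i) (w i) (ρ (i + 1))) (hge : ∀ i, y ≤ A.layerOf (ρ i) (w i))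
    {p : Q} (hp : A.layer p = y + 1) (hpρ : A.μ p = A.muHat y (ρ 0))
    (hsafe : A.SafeInf (y + 1) p w) {i : ℕ} (hi : A.layerOf (ρ i) (w i) = y)
    (hsuffix : ∀ q', A.semStep (ρ i) (w i) q' →
      A.suffixReaches (A.muHat (y + 1) q') (wordPrefix w (i + 1)) →
      A.suffixReaches (A.muHat (y + 1) (ρ (i + 1))) (wordPrefix w (i + 1))) :
    ∃ t, A.layer t = y + 1 ∧
      A.runList t (wordPrefix w (i + 1)) = some (A.muHat (y + 1) (ρ (i + 1))) := by
  rw [← hp] at hsafe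
  obtain ⟨R, hR⟩ := Option.isSome_iff_exists.mp (safeInf_layer_iff.mp hsafe (i + 1))
  have hR_layer : A.layer R = y + 1 := (A.layer_of_runList_eq_some hR).trans hp
  have hμR : A.μ R = A.muHat y (ρ (i + 1)) := by
    have hμrun := A.runList_iterate_mu hR 1
    have hρrun := A.runList_muHat_of_semStep hstep hy (n := 0) (m := i + 1) fun j _ _ => hge j
    rw [Function.iterate_one, hpρ] at hμrun
    rw [wordDrop_zero, Nat.zero_add] at hρrun
    exact Option.some.inj (hμrun.symm.trans hρrun)
  obtain ⟨c, hc, hRc, hcR⟩ := A.exists_isLeaf_muHat_eq R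
  rw [hR_layer] at hRc hcR
  have hc_step : A.semStep (ρ i) (w i) c := ⟨hc, by
    rw [hi, A.δ_muHat_of_semStep (hstep i) hy hi.ge, ← hμR, ← hcR, A.mu_muHat_succ (by omega)]⟩
  have hρ_layer : y + 1 ≤ A.layer (ρ (i + 1)) := by
    rcases (hi ▸ A.layerOf_le_layer_of_semStep (hstep i)).lt_or_eq with hlt | heq
    · exact hlt
    · exact absurd (by rw [hμR, A.muHat_of_layer_le heq.ge]) ((hstep i).1 R (by omega))
  obtain ⟨t, ht, hrun⟩ := hsuffix c hc_step ⟨p, by rw [hcR, hR_layer, hp], by rw [hcR]; exact hR⟩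
  exact ⟨t, ht.trans (A.layer_muHat (by omega) hρ_layer), hrun⟩

theorem runList_eq_none_of_eq_muHat_succ (hstep : ∀ i, A.semStep (ρ i) (w i) (ρ (i + 1)))
    (hge : ∀ i, y ≤ A.layerOf (ρ i) (w i)) {t : Q} (ht : A.layer t = y + 1) {k : ℕ}
    (hk : A.runList t (wordPrefix w k) = some (A.muHat (y + 1) (ρ k))) {j : ℕ} (hkj : k ≤ j)
    (hj : A.layerOf (ρ j) (w j) = y) : A.runList t (wordPrefix w (j + 1)) = none := by
  have hdie : ∀ m, A.runList t (wordPrefix w m) = some (A.muHat (y + 1) (ρ m)) →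
      A.layerOf (ρ m) (w m) = y → A.runList t (wordPrefix w (m + 1)) = none := fun m h hm => by
    rw [wordPrefix_succ, A.runList_append_singleton h]
    refine A.δ_muHat_eq_none_of_layerOf_lt (by omega) (A.le_layer_of_layer_muHat ?_)
    rw [A.layer_of_runList_eq_some h, ht]
  have hfollow : ∀ m, k ≤ m → A.runList t (wordPrefix w m) = none ∨
      A.runList t (wordPrefix w m) = some (A.muHat (y + 1) (ρ m)) := by
    intro m hm
    induction m, hm using Nat.le_induction with
    | base => exact Or.inr hk
    | succ m _ ih =>
      rcases ih with h | h
      · exact Or.inl (wordPrefix_succ w m ▸ A.runList_append_of_eq_none h _)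
      · by_cases hm : A.layerOf (ρ m) (w m) = y
        · exact Or.inl (hdie m h hm)
        · rw [wordPrefix_succ, A.runList_append_singleton h]
          exact Or.inr (A.δ_muHat_of_semStep (hstep m) (by omega) (by have := hge m; omega))
  rcases hfollow j hkj with h | h
  · exact wordPrefix_succ w j ▸ A.runList_append_of_eq_none h _
  · exact hdie j h hj

theorem not_safeInf_of_suffixReaches [Finite Q] (hy : 1 ≤ y)
    (hstep : ∀ i, A.semStep (ρ i) (w i) (ρ (i + 1))) (hge : ∀ i, y ≤ A.layerOf (ρ i) (w i))
    (hfreq : ∃ᶠ i in atTop, A.layerOf (ρ i) (w i) = y)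
    (hsuffix : ∀ i, A.layerOf (ρ i) (w i) = y → ∀ q', A.semStep (ρ i) (w i) q' →
      A.suffixReaches (A.muHat (y + 1) q') (wordPrefix w (i + 1)) →
      A.suffixReaches (A.muHat (y + 1) (ρ (i + 1))) (wordPrefix w (i + 1)))
    {p : Q} (hp : A.layer p = y + 1) (hpρ : A.μ p = A.muHat y (ρ 0)) :
    ¬ A.SafeInf (y + 1) p w := by
  intro hsafe
  have : Nonempty Q := ⟨p⟩
  have hstart : ∀ i ∈ {i | A.layerOf (ρ i) (w i) = y}, ∃ t, A.layer t = y + 1 ∧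
      A.runList t (wordPrefix w (i + 1)) = some (A.muHat (y + 1) (ρ (i + 1))) := fun i hi =>
    exists_runList_eq_muHat_succ hy hstep hge hp hpρ hsafe hi (hsuffix i hi)
  choose! T hT_layer hT_run using hstart
  obtain ⟨i, hi, j, hj, hij, hT⟩ :=
    (Nat.frequently_atTop_iff_infinite.mp hfreq).exists_lt_map_eq_of_mapsTo
      (Set.mapsTo_univ T _) Set.finite_univ
  have hdead := runList_eq_none_of_eq_muHat_succ hstep hge (hT_layer i hi) (hT_run i hi) hij hj
  rw [hT, hT_run j hj] at hdead
  exact Option.some_ne_none _ hdead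

theorem stronglySafe_muHat_of_maximisesSuffixAt [Finite Q]
    (hstep : ∀ i, A.semStep (ρ i) (w i) (ρ (i + 1))) (hy : 1 ≤ y) {n : ℕ}
    (hge : ∀ i, n ≤ i → y ≤ A.layerOf (ρ i) (w i))
    (hfreq : ∃ᶠ i in atTop, A.layerOf (ρ i) (w i) = y)
    (hmax : ∀ i, n ≤ i → A.layerOf (ρ i) (w i) = y → A.MaximisesSuffixAt w ρ i) :
    A.StronglySafe (A.muHat y (ρ n)) (wordDrop w n) := by
  have hlayer : A.layer (A.muHat y (ρ n)) = y :=
    A.layer_muHat hy ((hge n le_rfl).trans (A.layerOf_le _ _))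
  have hrun : ∀ m, A.runList (A.muHat y (ρ n)) (wordPrefix (wordDrop w n) m) =
      some (A.muHat y (ρ (n + m))) := fun m =>
    A.runList_muHat_of_semStep hstep hy fun i hi _ => hge i hi
  refine ⟨safeInf_layer_iff.mpr fun m => by rw [hrun]; rfl, fun m p' hp' hrun' hsafe => ?_⟩
  rw [hlayer] at hp'
  rw [hrun m] at hrun'
  rw [hp', wordDrop_wordDrop] at hsafe
  refine not_safeInf_of_suffixReaches (w := wordDrop w (n + m)) (ρ := fun i => ρ (n + m + i)) hy
    (fun i => hstep _) (fun i => hge _ (by omega)) (frequently_atTop_add_left hfreq _)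
    (fun i hi q' hq' hreach => ?_) hp' (Option.some.inj hrun').symm hsafe
  exact (hmax (n + m + i) (by omega) hi).suffixReaches_wordDrop hi hq' hreach

theorem even_minInfOften_iff_of_stronglySafe [Finite Q] (hcons : A.Consistent) {p₀ : Q} {n₀ : ℕ}
    (hp₀ : A.StronglySafe p₀ (wordDrop w n₀))
    (hrun₀ : A.runList (A.muHat 1 (ρ 0)) (wordPrefix w n₀) = some (A.muHat 1 p₀))
    (hstep : ∀ i, A.semStep (ρ i) (w i) (ρ (i + 1)))
    (hmax : ∀ i, (Even (A.semPrio (ρ i) (w i)) ↔ ¬ Even (A.layer p₀)) →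
      A.MaximisesSuffixAt w ρ i) :
    Even (minInfOften (A.runPrios w ρ)) ↔ Even (A.layer p₀) := by
  set y := minInfOften (A.runPrios w ρ)
  have hbound : ∀ i, A.runPrios w ρ i ≤ d := fun i => (A.layerOf_le _ _).trans (A.layer_le _)
  have hfreq : ∃ᶠ i in atTop, A.layerOf (ρ i) (w i) = y := frequently_eq_minInfOften hbound
  obtain ⟨n₁, hn₁⟩ :=
    (eventually_minInfOften_le.and (eventually_ge_atTop n₀)).exists_forall_of_atTop
  have hy : 1 ≤ y := by
    obtain ⟨i, hi⟩ := hfreq.exists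
    exact hi ▸ A.one_le_layerOf _ _
  by_contra hpar
  have hq₁ := stronglySafe_muHat_of_maximisesSuffixAt hstep hy (fun i hi => (hn₁ i hi).1) hfreq
    fun i _ hi => hmax i (by simp only [semPrio, hi]; tauto)
  obtain ⟨p₁, hp₁⟩ := Option.isSome_iff_exists.mp (safeInf_layer_iff.mp hp₀.1 (n₁ - n₀))
  have hn₀₁ : n₀ + (n₁ - n₀) = n₁ := Nat.add_sub_cancel' (hn₁ n₁ le_rfl).2
  have hp₁_safe := hp₀.drop hp₁
  rw [wordDrop_wordDrop, hn₀₁] at hp₁_safe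
  have hyρ : y ≤ A.layer (ρ n₁) := (hn₁ n₁ le_rfl).1.trans (A.layerOf_le _ _)
  have hμ : A.muHat 1 p₁ = A.muHat 1 (A.muHat y (ρ n₁)) := by
    have hrun₁ : A.runList (A.muHat 1 (ρ 0)) (wordPrefix w n₁) = some (A.muHat 1 p₁) := by
      rw [← hn₀₁, wordPrefix_add, runList_append, hrun₀, Option.bind_some]
      exact A.runList_muHat hp₁ 1
    rw [A.muHat_muHat le_rfl hy hyρ]
    exact Option.some.inj (hrun₁.symm.trans (A.runList_muHat_one_of_semStep hstep n₁))
  have hparity := even_layer_iff_of_stronglySafe hcons hμ hp₁_safe hq₁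
  rw [A.layer_of_runList_eq_some hp₁, A.layer_muHat hy hyρ] at hparity
  exact hpar hparity.symm

theorem exists_isGreatest_ultSafeFrom {q₀ : Q} (hq₀ : A.layer q₀ = 1) (w : ℕ → α) :
    ∃ x, IsGreatest {x | A.UltSafeFrom q₀ x w} x := by
  have hone : A.UltSafeFrom q₀ 1 w := ⟨0, q₀, hq₀, by rw [A.muHat_of_layer_le hq₀.le]; rfl,
    fun n => by
      rw [SafeFin, A.muHat_of_layer_le hq₀.le]
      exact A.runList_isSome_of_layer_eq_one hq₀ _⟩
  have hbdd : BddAbove {x | A.UltSafeFrom q₀ x w} := ⟨d, fun x ⟨_, p, hp, _⟩ => hp ▸ A.layer_le p⟩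
  exact ⟨sSup _, Nat.sSup_mem ⟨1, hone⟩ hbdd, fun x hx => le_csSup hbdd hx⟩

theorem exists_stronglySafe_of_isGreatest {q₀ : Q} {x : ℕ}
    (hx : IsGreatest {x | A.UltSafeFrom q₀ x w} x) :
    ∃ n p, A.layer p = x ∧ A.runList q₀ (wordPrefix w n) = some (A.muHat 1 p) ∧
      A.StronglySafe p (wordDrop w n) := by
  obtain ⟨n, p, hp, hrun, hsafe⟩ := hx.1
  refine ⟨n, p, hp, hrun, hp ▸ hsafe, fun m p' hp' hrun' hsafe' => ?_⟩
  have hmu : A.muHat 1 (A.μ p') = A.muHat 1 p' := by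
    conv_lhs => rw [← A.muHat_self p', hp', A.mu_muHat_succ (by omega)]
    exact A.muHat_muHat le_rfl (A.layer_pos p) (by omega)
  have hult : A.UltSafeFrom q₀ (x + 1) w := by
    refine ⟨n + m, p', by omega, ?_, by rwa [hp', hp, wordDrop_wordDrop] at hsafe'⟩
    rw [wordPrefix_add, runList_append, hrun, Option.bind_some, ← hmu]
    exact A.runList_muHat hrun' 1
  exact absurd (hx.2 hult) (by omega)

theorem semAccept_iff_layeredAcceptFrom [Finite Q] (hcons : A.Consistent) (l : Q) (w : ℕ → α) :
    A.SemAccept l w ↔ A.LayeredAcceptFrom (A.muHat 1 l) w := by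
  obtain ⟨x, hx⟩ := A.exists_isGreatest_ultSafeFrom (A.layer_muHat le_rfl (A.layer_pos l)) w
  have hlayered : A.LayeredAcceptFrom (A.muHat 1 l) w ↔ Even x :=
    ⟨fun ⟨x', hx', hmem, hle⟩ =>
      (IsGreatest.unique (s := {x | A.UltSafeFrom _ x w}) ⟨hmem, fun y hy => hle y hy⟩ hx) ▸ hx',
      fun h => ⟨x, h, hx.1, fun _ hy => hx.2 hy⟩⟩
  obtain ⟨n₀, p₀, rfl, hrun₀, hp₀⟩ := exists_stronglySafe_of_isGreatest hx
  obtain ⟨σ, hσE, hσA⟩ := A.exists_longestSuffixResolver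
  have hparity : ∀ ρ, A.IsSemRun w l ρ →
      (∀ i, (Even (A.semPrio (ρ i) (w i)) ↔ ¬ Even (A.layer p₀)) → A.MaximisesSuffixAt w ρ i) →
      (ParityAccept (A.runPrios w ρ) ↔ Even (A.layer p₀)) := fun ρ ⟨hρ0, hstep⟩ hmax =>
    even_minInfOften_iff_of_stronglySafe hcons hp₀ (hρ0 ▸ hrun₀) hstep hmax
  rw [hlayered]
  by_cases hx_even : Even (A.layer p₀)
  · refine iff_of_true ⟨σ, hσE.1, fun ρ hρ hρσ => (hparity ρ hρ fun i hi => ?_).mpr hx_even⟩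
      hx_even
    exact hσE.maximisesSuffixAt hρσ (Nat.not_even_iff_odd.mp fun h => hi.mp h hx_even)
  · refine iff_of_false (fun ⟨σ', hσ', hwin⟩ => ?_) hx_even
    obtain ⟨ρ, hρ, hρσ', hρσ⟩ := exists_isSemRun_consEve_consAdam hσ' hσA.1 w l
    exact hx_even ((hparity ρ hρ fun i hi => hσA.maximisesSuffixAt hρσ (hi.mpr hx_even)).mp
      (hwin ρ hρ hρσ'))

theorem unifSD_of_consistent [Finite Q] (hcons : A.Consistent) : A.UnifSD := by
  intro p q _ _ hpq w
  rw [semAccept_iff_layeredAcceptFrom hcons, semAccept_iff_layeredAcceptFrom hcons, hpq]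

end Layered

theorem statement_1_general {Q α : Type} [Fintype Q] {d : ℕ}
    (A : Layered Q α d) :
    A.Consistent ↔ A.UnifSD :=
  ⟨Layered.unifSD_of_consistent, Layered.consistent_of_unifSD⟩

/-- A layered automaton is consistent if and only if it is uniformly
semantically deterministic. -/
theorem statement_1 {Q α : Type} [Fintype Q] [Fintype α] [Nonempty α] {d : ℕ} (hd : 1 ≤ d)
    (A : Layered Q α d) :
    A.Consistent ↔ A.UnifSD :=
  statement_1_general A
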